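/- arXiv:1901.04172 — 2 statements merged into one kernel-verified Lean document; each statement's English description precedes it below -/
import Mathlib

section
/- R̂ic(U_1) ≥ ((c+3)/4)(r−1) − (1/4)‖N‖² (that is, the last term is −(1/4) r² ‖H‖²). Equality holds if and only if T(U_1, U_1) = Σ_{j=2}^r T(U_j, U_j) and T(U_1, U_j) = 0 for all j = 2, …, r. -/
open scoped RealInnerProductSpace

open Finset

/-!
Expanding the Gauss equation in the orthonormal frame gives
`R̂ic(U₁) = (c+3)/4 (r-1) - ⟪N, T₁₁⟫ + ∑ⱼ ‖T₁ⱼ‖²`, and completing the square,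
`‖T₁₁‖² - ⟪N, T₁₁⟫ = ‖T₁₁ - N/2‖² - ‖N‖²/4`, turns this into
`R̂ic(U₁) = (c+3)/4 (r-1) - ‖N‖²/4 + ‖T₁₁ - N/2‖² + ∑_{j ≠ 1} ‖T₁ⱼ‖²`.
Equality thus forces `T₁ⱼ = 0` for `j ≠ 1` and `2 T₁₁ = N`, i.e. `T₁₁ = ∑_{j ≠ 1} Tⱼⱼ`.
-/

section Algebra

variable {ι W : Type*} [Fintype ι] [DecidableEq ι]

lemma sum_filter_ne_norm_sq_eq_zero_iff [NormedAddCommGroup W] (f : ι → W) (i : ι) :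
    ∑ j ∈ univ.filter (· ≠ i), ‖f j‖ ^ 2 = 0 ↔ ∀ j, j ≠ i → f j = 0 := by
  rw [sum_eq_zero_iff_of_nonneg fun j _ => sq_nonneg _]
  simp

lemma eq_half_smul_sum_iff [AddCommGroup W] [Module ℝ W] (f : ι → W) (i : ι) :
    f i = (1 / 2 : ℝ) • ∑ j, f j ↔ f i = ∑ j ∈ univ.filter (· ≠ i), f j := by
  rw [filter_ne', ← add_sum_erase univ f (mem_univ i)]
  constructor <;> intro h
  · linear_combination (norm := module) (2 : ℝ) • h
  · linear_combination (norm := module) (1 / 2 : ℝ) • h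

lemma norm_sq_sub_inner_eq [NormedAddCommGroup W] [InnerProductSpace ℝ W] (a N : W) :
    ‖a‖ ^ 2 - ⟪N, a⟫ = ‖a - (1 / 2 : ℝ) • N‖ ^ 2 - 1 / 4 * ‖N‖ ^ 2 := by
  rw [norm_sub_sq_real, real_inner_smul_right, real_inner_comm a N, norm_smul,
    Real.norm_of_nonneg (by norm_num : (0 : ℝ) ≤ 1 / 2)]
  ring

end Algebra

section Curvature

variable {V W : Type*} [NormedAddCommGroup V] [InnerProductSpace ℝ V]
  [NormedAddCommGroup W] [InnerProductSpace ℝ W]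

/-- The curvature tensor of a submanifold of a space of constant curvature `k` with second
fundamental form `T`, given by the Gauss equation; here `k = (c + 3) / 4`. -/
def gaussCurvature (k : ℝ) (T : V →ₗ[ℝ] V →ₗ[ℝ] W) (X Y Z W' : V) : ℝ :=
  k * (⟪Y, Z⟫ * ⟪X, W'⟫ - ⟪X, Z⟫ * ⟪Y, W'⟫) - ⟪T X W', T Y Z⟫ + ⟪T Y W', T X Z⟫

section Frame

variable {ι : Type*} [Fintype ι] [DecidableEq ι] {U : ι → V} (hU : Orthonormal ℝ U)
  (k : ℝ) {T : V →ₗ[ℝ] V →ₗ[ℝ] W} (hT : ∀ X Y, T X Y = T Y X)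
include hU hT

omit [Fintype ι] in
lemma gaussCurvature_orthonormal (i j : ι) :
    gaussCurvature k T (U j) (U i) (U i) (U j) =
      k * (1 - if j = i then 1 else 0) - ⟪T (U j) (U j), T (U i) (U i)⟫
        + ‖T (U i) (U j)‖ ^ 2 := by
  rw [orthonormal_iff_ite] at hU
  simp only [gaussCurvature, hU, hT (U j) (U i), real_inner_self_eq_norm_sq, if_true,
    eq_comm (a := i)]
  split_ifs <;> ring

lemma sum_gaussCurvature_orthonormal (i : ι) :
    ∑ j, gaussCurvature k T (U j) (U i) (U i) (U j) =
      k * (Fintype.card ι - 1) - 1 / 4 * ‖∑ j, T (U j) (U j)‖ ^ 2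
        + (‖T (U i) (U i) - (1 / 2 : ℝ) • ∑ j, T (U j) (U j)‖ ^ 2
          + ∑ j ∈ univ.filter (· ≠ i), ‖T (U i) (U j)‖ ^ 2) := by
  have hdiag : ∑ j, ‖T (U i) (U j)‖ ^ 2
      = ‖T (U i) (U i)‖ ^ 2 + ∑ j ∈ univ.filter (· ≠ i), ‖T (U i) (U j)‖ ^ 2 := by
    rw [filter_ne', add_sum_erase _ (fun j => ‖T (U i) (U j)‖ ^ 2) (mem_univ i)]
  have hsq := norm_sq_sub_inner_eq (T (U i) (U i)) (∑ j, T (U j) (U j))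
  simp only [gaussCurvature_orthonormal hU k hT, sum_add_distrib, sum_sub_distrib, ← mul_sum,
    sum_ite_eq', mem_univ, if_true, sum_const, card_univ, nsmul_eq_mul, mul_one, ← sum_inner,
    hdiag]
  linarith

end Frame

end Curvature

/-- Chen–Ricci inequality for the fibers (horizontal Reeb vector field). -/
theorem stmt_11 {V W : Type*} [NormedAddCommGroup V] [InnerProductSpace ℝ V]
    [NormedAddCommGroup W] [InnerProductSpace ℝ W]
    (c : ℝ) (r : ℕ) (hr : 0 < r)
    (U : OrthonormalBasis (Fin r) ℝ V)
    (T : V →ₗ[ℝ] V →ₗ[ℝ] W) (hT : ∀ X Y, T X Y = T Y X)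
    (N : W) (hN : N = ∑ j, T (U j) (U j))
    (Rhat : V → V → V → V → ℝ)
    (hRhat : ∀ X Y Z W', Rhat X Y Z W' =
      (c + 3) / 4 * (⟪Y, Z⟫ * ⟪X, W'⟫ - ⟪X, Z⟫ * ⟪Y, W'⟫)
        - ⟪T X W', T Y Z⟫ + ⟪T Y W', T X Z⟫)
    (Ric : V → ℝ) (hRic : ∀ u, Ric u = ∑ j, Rhat (U j) u u (U j)) :
    (Ric (U ⟨0, hr⟩) ≥ (c + 3) / 4 * ((r : ℝ) - 1) - (1 / 4) * ‖N‖ ^ 2) ∧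
    ((Ric (U ⟨0, hr⟩) = (c + 3) / 4 * ((r : ℝ) - 1) - (1 / 4) * ‖N‖ ^ 2) ↔
      (T (U ⟨0, hr⟩) (U ⟨0, hr⟩) =
          ∑ j ∈ Finset.univ.filter (fun j => j ≠ ⟨0, hr⟩), T (U j) (U j) ∧
        ∀ j : Fin r, j ≠ ⟨0, hr⟩ → T (U ⟨0, hr⟩) (U j) = 0)) := by
  set i : Fin r := ⟨0, hr⟩
  have hRic_eq : Ric (U i) = (c + 3) / 4 * ((r : ℝ) - 1) - 1 / 4 * ‖N‖ ^ 2
      + (‖T (U i) (U i) - (1 / 2 : ℝ) • N‖ ^ 2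
        + ∑ j ∈ univ.filter (· ≠ i), ‖T (U i) (U j)‖ ^ 2) := by
    have hR : Rhat = gaussCurvature ((c + 3) / 4) T := by
      funext X Y Z W'; exact hRhat X Y Z W'
    rw [hRic, hR, sum_gaussCurvature_orthonormal U.orthonormal _ hT, Fintype.card_fin, hN]
  have hmean := sq_nonneg ‖T (U i) (U i) - (1 / 2 : ℝ) • N‖
  have hoff : 0 ≤ ∑ j ∈ univ.filter (· ≠ i), ‖T (U i) (U j)‖ ^ 2 :=
    sum_nonneg fun j _ => sq_nonneg _
  refine ⟨by linarith, ?_⟩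
  rw [← eq_half_smul_sum_iff (fun j => T (U j) (U j)), ← hN,
    ← sum_filter_ne_norm_sq_eq_zero_iff _ i, ← sub_eq_zero (b := (1 / 2 : ℝ) • N),
    ← norm_eq_zero, ← sq_eq_zero_iff, ← add_eq_zero_iff_of_nonneg hmean hoff, hRic_eq,
    add_eq_left]
end

section
/- ((c+3)/4)(nr + n + r − 2) + ((c−1)/4)(2r − 1 − (n−2) η(X_1)² + 3‖C X_1‖²) ≤ R̂ic(U_1) + Ric*(X_1) + (1/4)‖N‖² + 3 Σ_{s=2}^n ‖A(X_1, X_s)‖² − δ + tV − aH. Equality holds if and only if T(U_1, U_1) = Σ_{j=2}^r T(U_j, U_j) and T(U_1, U_j) = 0 for all j = 2, …, r. -/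
/-!
Evaluated against the orthonormal frames, the horizontal and mixed curvature sums reduce, by
Parseval's identity applied to `ξ`, `C X₁` and the horizontal vectors `φ Uₖ`, to constants
plus `-3 ∑ ‖A(X₁, Xₛ)‖²`, while the fiber sum equals
`(c+3)/4 (r-1) - ⟪N, T(U₁,U₁)⟫ + ∑ₖ ‖T(U₁,Uₖ)‖²`. Completing the square with `‖N‖²/4`,
right-hand side minus left-hand side is `‖N/2 - T(U₁,U₁)‖² + ∑_{k ≥ 2} ‖T(U₁,Uₖ)‖²`, which is
nonnegative and vanishes exactly in the stated case.
-/

open scoped RealInnerProductSpace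
open Finset

lemma apply_self_eq_zero_of_skew {M N : Type*} [AddCommGroup M] [AddCommGroup N] [Module ℝ N]
    {A : M → M → N} (hA : ∀ x y, A x y = -A y x) (x : M) : A x x = 0 := by
  have := hA x x
  rwa [eq_neg_iff_add_eq_zero, ← two_smul ℝ, smul_eq_zero, or_iff_right two_ne_zero] at this

section Defect

variable {ι W : Type*} [Fintype ι] [DecidableEq ι] [NormedAddCommGroup W] [Module ℝ W]

lemma norm_half_sum_sub_sq_add_sum_eq_zero_iff (f g : ι → W) (i₀ : ι) :
    ‖(1 / 2 : ℝ) • ∑ i, f i - f i₀‖ ^ 2 + ∑ i ∈ univ.erase i₀, ‖g i‖ ^ 2 = 0 ↔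
      f i₀ = ∑ i ∈ univ.erase i₀, f i ∧ ∀ i, i ≠ i₀ → g i = 0 := by
  have hhalf :
      (1 / 2 : ℝ) • ∑ i, f i - f i₀ = (1 / 2 : ℝ) • (∑ i ∈ univ.erase i₀, f i - f i₀) := by
    rw [← add_sum_erase univ f (mem_univ i₀)]
    module
  rw [add_eq_zero_iff_of_nonneg (by positivity) (sum_nonneg fun _ _ => by positivity),
    sum_eq_zero_iff_of_nonneg fun _ _ => by positivity, hhalf]
  simp only [pow_eq_zero_iff two_ne_zero, norm_eq_zero, smul_eq_zero, one_div, inv_eq_zero,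
    two_ne_zero, false_or, sub_eq_zero, mem_erase, mem_univ, and_true, eq_comm (a := f i₀)]

end Defect

noncomputable section Curvatures

variable {E V W : Type*}
  [NormedAddCommGroup E] [InnerProductSpace ℝ E]
  [NormedAddCommGroup V] [InnerProductSpace ℝ V]
  [NormedAddCommGroup W] [InnerProductSpace ℝ W]

def fiberCurvature (c : ℝ) (T : V →ₗ[ℝ] V →ₗ[ℝ] W) (x y z w : V) : ℝ :=
  (c + 3) / 4 * (⟪y, z⟫ * ⟪x, w⟫ - ⟪x, z⟫ * ⟪y, w⟫) - ⟪T x w, T y z⟫ + ⟪T y w, T x z⟫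

def horizontalCurvature (c : ℝ) (ξ : E) (C : E → E) (A : E →ₗ[ℝ] E →ₗ[ℝ] V)
    (x y z w : E) : ℝ :=
  (c + 3) / 4 * (⟪y, z⟫ * ⟪x, w⟫ - ⟪x, z⟫ * ⟪y, w⟫)
    + (c - 1) / 4 * (⟪x, ξ⟫ * ⟪z, ξ⟫ * ⟪y, w⟫ - ⟪y, ξ⟫ * ⟪z, ξ⟫ * ⟪x, w⟫
        + ⟪y, ξ⟫ * ⟪w, ξ⟫ * ⟪x, z⟫ - ⟪x, ξ⟫ * ⟪w, ξ⟫ * ⟪y, z⟫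
        + ⟪C y, z⟫ * ⟪C x, w⟫ - ⟪C y, w⟫ * ⟪C x, z⟫ - 2 * ⟪w, C z⟫ * ⟪C x, y⟫)
    + 2 * ⟪A x y, A z w⟫ - ⟪A y z, A x w⟫ + ⟪A x z, A y w⟫

def sasakianCurvature (c : ℝ) (ξ : E) (φ : E → E) (x y z w : E) : ℝ :=
  (c + 3) / 4 * (⟪y, z⟫ * ⟪x, w⟫ - ⟪x, z⟫ * ⟪y, w⟫)
    + (c - 1) / 4 * (⟪x, ξ⟫ * ⟪z, ξ⟫ * ⟪y, w⟫ - ⟪y, ξ⟫ * ⟪z, ξ⟫ * ⟪x, w⟫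
        + ⟪y, ξ⟫ * ⟪w, ξ⟫ * ⟪x, z⟫ - ⟪x, ξ⟫ * ⟪w, ξ⟫ * ⟪y, z⟫
        + ⟪φ y, z⟫ * ⟪φ x, w⟫ - ⟪φ x, z⟫ * ⟪φ y, w⟫ - 2 * ⟪φ x, y⟫ * ⟪φ z, w⟫)

lemma inner_orthogonalProjectionOnto_comp_skew {K : Submodule ℝ E} [K.HasOrthogonalProjection]
    {φ : E → E} (hφ : ∀ Y Z, ⟪φ Y, Z⟫ = -⟪Y, φ Z⟫) {C : K → K}
    (hC : ∀ x, (C x : E) = K.orthogonalProjectionOnto (φ x)) (x y : K) :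
    ⟪C x, y⟫ = -⟪x, C y⟫ := by
  have hCφ : ∀ x y : K, ⟪C x, y⟫ = ⟪φ x, (y : E)⟫ := fun x y => by
    rw [Subtype.ext (hC x), Submodule.inner_orthogonalProjectionOnto_eq_of_mem_right]
  rw [hCφ, hφ, real_inner_comm (C y) x, hCφ, real_inner_comm (φ y)]

variable {ι : Type*} [Fintype ι]

lemma OrthonormalBasis.sum_inner_coe_mul_inner_coe {K : Submodule ℝ E}
    (X : OrthonormalBasis ι ℝ K) {v w : E} (hv : v ∈ K) (hw : w ∈ K) :
    ∑ i, ⟪v, (X i : E)⟫ * ⟪(X i : E), w⟫ = ⟪v, w⟫ := by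
  simpa using X.sum_inner_mul_inner ⟨v, hv⟩ ⟨w, hw⟩

lemma sum_fiberCurvature_eq [DecidableEq ι] (c : ℝ) {T : V →ₗ[ℝ] V →ₗ[ℝ] W}
    (hT : ∀ u v, T u v = T v u) (U : OrthonormalBasis ι ℝ V) (k₀ : ι) :
    ∑ k, fiberCurvature c T (U k) (U k₀) (U k₀) (U k) =
      (c + 3) / 4 * (Fintype.card ι - 1) - 1 / 4 * ‖∑ j, T (U j) (U j)‖ ^ 2
        + ‖(1 / 2 : ℝ) • ∑ j, T (U j) (U j) - T (U k₀) (U k₀)‖ ^ 2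
        + ∑ k ∈ univ.erase k₀, ‖T (U k₀) (U k)‖ ^ 2 := by
  set u := U k₀
  have hu : ⟪u, u⟫ = 1 := inner_self_eq_one_of_norm_eq_one (U.orthonormal.1 k₀)
  have hterm : ∀ k, fiberCurvature c T (U k) u u (U k) =
      (c + 3) / 4 * (1 - ⟪u, U k⟫ * ⟪U k, u⟫) - ⟪T (U k) (U k), T u u⟫
        + ‖T u (U k)‖ ^ 2 := by
    intro k
    rw [fiberCurvature, hu, hT (U k) u, real_inner_self_eq_norm_sq, real_inner_self_eq_norm_sq,
      U.orthonormal.1 k, real_inner_comm u (U k)]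
    ring
  have hsplit := add_sum_erase univ (fun k => ‖T u (U k)‖ ^ 2) (mem_univ k₀)
  simp only [hterm, sum_add_distrib, sum_sub_distrib, ← mul_sum, ← sum_inner,
    U.sum_inner_mul_inner, hu, sum_const, card_univ, nsmul_eq_mul, ← hsplit,
    norm_sub_sq_real, norm_smul, real_inner_smul_left, Real.norm_of_nonneg one_half_pos.le]
  ring

lemma sum_horizontalCurvature_eq (c : ℝ) {ξ : E} (hξ : ‖ξ‖ = 1) {C : E → E}
    (hC : ∀ x y, ⟪C x, y⟫ = -⟪x, C y⟫) {A : E →ₗ[ℝ] E →ₗ[ℝ] V} (hA : ∀ x y, A x y = -A y x)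
    (X : OrthonormalBasis ι ℝ E) {x : E} (hx : ‖x‖ = 1) :
    ∑ s, horizontalCurvature c ξ C A x (X s) (X s) x =
      (c + 3) / 4 * (Fintype.card ι - 1)
        + (c - 1) / 4 * (-1 - (Fintype.card ι - 2) * ⟪x, ξ⟫ ^ 2 + 3 * ‖C x‖ ^ 2)
        - 3 * ∑ s, ‖A x (X s)‖ ^ 2 := by
  have hxx : ⟪x, x⟫ = 1 := inner_self_eq_one_of_norm_eq_one hx
  have hξξ : ⟪ξ, ξ⟫ = 1 := inner_self_eq_one_of_norm_eq_one hξ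
  have hCxx : ⟪C x, C x⟫ = ‖C x‖ ^ 2 := real_inner_self_eq_norm_sq _
  have hCself : ∀ y, ⟪C y, y⟫ = 0 := fun y => by
    linarith [hC y y, real_inner_comm (C y) y]
  have hAself : ∀ y, A y y = 0 := apply_self_eq_zero_of_skew (A := fun x y => A x y) hA
  have hterm : ∀ s, horizontalCurvature c ξ C A x (X s) (X s) x =
      (c + 3) / 4 * (1 - ⟪x, X s⟫ * ⟪X s, x⟫)
        + (c - 1) / 4 * (2 * ⟪x, ξ⟫ * (⟪ξ, X s⟫ * ⟪X s, x⟫) - ⟪ξ, X s⟫ * ⟪X s, ξ⟫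
          - ⟪x, ξ⟫ ^ 2 + 3 * (⟪C x, X s⟫ * ⟪X s, C x⟫))
        - 3 * ‖A x (X s)‖ ^ 2 := by
    intro s
    have hXX : ⟪X s, X s⟫ = 1 := inner_self_eq_one_of_norm_eq_one (X.orthonormal.1 s)
    rw [horizontalCurvature, hCself, real_inner_comm (C (X s)) x, hC (X s) x, hA (X s) x,
      hAself, hXX, hxx, inner_neg_right, inner_zero_left, real_inner_self_eq_norm_sq,
      real_inner_comm ξ (X s), real_inner_comm x (X s), real_inner_comm (X s) (C x)]
    ring
  simp only [hterm, sum_add_distrib, sum_sub_distrib, ← mul_sum, X.sum_inner_mul_inner,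
    sum_const, card_univ, nsmul_eq_mul, hxx, hξξ, hCxx, real_inner_comm x ξ]
  ring

lemma sum_sasakianCurvature_mixed (c : ℝ) {K : Submodule ℝ E} (X : OrthonormalBasis ι ℝ Kᗮ)
    {ξ : E} (hξK : ξ ∈ Kᗮ) (hξ : ‖ξ‖ = 1) {φ : E → E} (hφskew : ∀ Y Z, ⟪φ Y, Z⟫ = -⟪Y, φ Z⟫)
    (hφ2 : ∀ Y, φ (φ Y) = -Y + ⟪Y, ξ⟫ • ξ) {u : E} (hu : u ∈ K) (hu1 : ‖u‖ = 1)
    (hφu : φ u ∈ Kᗮ) :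
    ∑ i, sasakianCurvature c ξ φ (X i) u u (X i) = (c + 3) / 4 * Fintype.card ι + (c - 1) / 2 := by
  have huu : ⟪u, u⟫ = 1 := inner_self_eq_one_of_norm_eq_one hu1
  have hξξ : ⟪ξ, ξ⟫ = 1 := inner_self_eq_one_of_norm_eq_one hξ
  have huξ : ⟪u, ξ⟫ = 0 := Submodule.inner_right_of_mem_orthogonal hu hξK
  have hφuu : ⟪φ u, u⟫ = 0 := by linarith [hφskew u u, real_inner_comm u (φ u)]
  have hφuφu : ⟪φ u, φ u⟫ = 1 := by
    rw [hφskew, hφ2, inner_add_right, inner_neg_right, inner_smul_right, huξ, huu]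
    ring
  have hterm : ∀ i, sasakianCurvature c ξ φ (X i) u u (X i) =
      (c + 3) / 4 + (c - 1) / 4 * (3 * (⟪φ u, (X i : E)⟫ * ⟪(X i : E), φ u⟫)
        - ⟪ξ, (X i : E)⟫ * ⟪(X i : E), ξ⟫) := by
    intro i
    have hXX : ⟪(X i : E), (X i : E)⟫ = 1 := inner_self_eq_one_of_norm_eq_one (X.orthonormal.1 i)
    have hXu : ⟪(X i : E), u⟫ = 0 := Submodule.inner_left_of_mem_orthogonal hu (X i).2
    rw [sasakianCurvature, huu, hXX, hXu, real_inner_comm (X i : E) u, hXu, huξ, hφuu,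
      hφskew (X i : E) u, real_inner_comm (X i : E) (φ u), real_inner_comm (X i : E) ξ]
    ring
  simp only [hterm, sum_add_distrib, sum_sub_distrib, ← mul_sum,
    X.sum_inner_coe_mul_inner_coe hφu hφu, X.sum_inner_coe_mul_inner_coe hξK hξK, hφuφu, hξξ,
    sum_const, card_univ, nsmul_eq_mul]
  ring

lemma sum_sum_sasakianCurvature_mixed (c : ℝ) {κ : Type*} [Fintype κ] {K : Submodule ℝ E}
    (U : OrthonormalBasis κ ℝ K) (X : OrthonormalBasis ι ℝ Kᗮ) {ξ : E} (hξK : ξ ∈ Kᗮ)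
    (hξ : ‖ξ‖ = 1) {φ : E → E} (hφskew : ∀ Y Z, ⟪φ Y, Z⟫ = -⟪Y, φ Z⟫)
    (hφ2 : ∀ Y, φ (φ Y) = -Y + ⟪Y, ξ⟫ • ξ) (hanti : ∀ v ∈ K, φ v ∈ Kᗮ) :
    ∑ i, ∑ k, sasakianCurvature c ξ φ (X i) (U k) (U k) (X i) =
      (c + 3) / 4 * (Fintype.card ι * Fintype.card κ) + (c - 1) / 4 * (2 * Fintype.card κ) := by
  rw [sum_comm]
  simp only [sum_sasakianCurvature_mixed c X hξK hξ hφskew hφ2 (U _).2 (U.orthonormal.1 _)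
    (hanti _ (U _).2), sum_const, card_univ, nsmul_eq_mul]
  ring

end Curvatures

/-- Combined Chen–Ricci inequality for an anti-invariant Riemannian submersion
from a Sasakian space form with horizontal Reeb vector field. -/
theorem stmt_14 {E : Type*} [NormedAddCommGroup E] [InnerProductSpace ℝ E]
    [FiniteDimensional ℝ E]
    (c : ℝ) (r n : ℕ) (hr : 0 < r) (hn : 0 < n)
    (VS : Submodule ℝ E)
    (U : OrthonormalBasis (Fin r) ℝ ↥VS)
    (X : OrthonormalBasis (Fin n) ℝ ↥VSᗮ)
    (ξ : E) (hξH : ξ ∈ VSᗮ) (hξ : ‖ξ‖ = 1)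
    (η : E → ℝ) (hη : ∀ Y, η Y = ⟪Y, ξ⟫)
    (φ : E →ₗ[ℝ] E) (hφskew : ∀ Y Z, ⟪φ Y, Z⟫ = -⟪Y, φ Z⟫)
    (hφ2 : ∀ Y, φ (φ Y) = -Y + η Y • ξ)
    (hanti : ∀ v ∈ VS, φ v ∈ VSᗮ)
    (C : ↥VSᗮ → ↥VSᗮ)
    (hC : ∀ x : ↥VSᗮ, (C x : E) = VSᗮ.orthogonalProjectionOnto (φ (x : E)))
    (T : ↥VS →ₗ[ℝ] ↥VS →ₗ[ℝ] ↥VSᗮ) (hT : ∀ u v, T u v = T v u)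
    (A : ↥VSᗮ →ₗ[ℝ] ↥VSᗮ →ₗ[ℝ] ↥VS) (hA : ∀ x y, A x y = -A y x)
    (N : ↥VSᗮ) (hN : N = ∑ j, T (U j) (U j))
    (Rhat : ↥VS → ↥VS → ↥VS → ↥VS → ℝ)
    (hRhat : ∀ x y z w, Rhat x y z w =
      (c + 3) / 4 * (⟪y, z⟫ * ⟪x, w⟫ - ⟪x, z⟫ * ⟪y, w⟫)
        - ⟪T x w, T y z⟫ + ⟪T y w, T x z⟫)
    (Rstar : ↥VSᗮ → ↥VSᗮ → ↥VSᗮ → ↥VSᗮ → ℝ)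
    (hRstar : ∀ x y z w, Rstar x y z w =
      (c + 3) / 4 * (⟪y, z⟫ * ⟪x, w⟫ - ⟪x, z⟫ * ⟪y, w⟫)
        + (c - 1) / 4 * (η (x : E) * η (z : E) * ⟪y, w⟫
            - η (y : E) * η (z : E) * ⟪x, w⟫
            + η (y : E) * η (w : E) * ⟪x, z⟫
            - η (x : E) * η (w : E) * ⟪y, z⟫
            + ⟪C y, z⟫ * ⟪C x, w⟫ - ⟪C y, w⟫ * ⟪C x, z⟫
            - 2 * ⟪w, C z⟫ * ⟪C x, y⟫)
        + 2 * ⟪A x y, A z w⟫ - ⟪A y z, A x w⟫ + ⟪A x z, A y w⟫)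
    (Rc : E → E → E → E → ℝ)
    (hRc : ∀ x y z w, Rc x y z w =
      (c + 3) / 4 * (⟪y, z⟫ * ⟪x, w⟫ - ⟪x, z⟫ * ⟪y, w⟫)
        + (c - 1) / 4 * (η x * η z * ⟪y, w⟫ - η y * η z * ⟪x, w⟫
            + η y * η w * ⟪x, z⟫ - η x * η w * ⟪y, z⟫
            + ⟪φ y, z⟫ * ⟪φ x, w⟫ - ⟪φ x, z⟫ * ⟪φ y, w⟫
            - 2 * ⟪φ x, y⟫ * ⟪φ z, w⟫))
    (δ tV aH : ℝ)
    (hmix : -δ + tV - aH = ∑ i, ∑ k,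
      Rc (X i : E) (U k : E) (U k : E) (X i : E)) :
    ((c + 3) / 4 * ((n : ℝ) * (r : ℝ) + (n : ℝ) + (r : ℝ) - 2)
        + (c - 1) / 4 * (2 * (r : ℝ) - 1
            - ((n : ℝ) - 2) * (η (X ⟨0, hn⟩ : E)) ^ 2
            + 3 * ‖C (X ⟨0, hn⟩)‖ ^ 2) ≤
      (∑ k, Rhat (U k) (U ⟨0, hr⟩) (U ⟨0, hr⟩) (U k))
        + (∑ s, Rstar (X ⟨0, hn⟩) (X s) (X s) (X ⟨0, hn⟩))
        + (1 / 4) * ‖N‖ ^ 2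
        + 3 * ∑ s ∈ Finset.univ.filter (fun s => s ≠ ⟨0, hn⟩),
            ‖A (X ⟨0, hn⟩) (X s)‖ ^ 2
        - δ + tV - aH) ∧
    (((c + 3) / 4 * ((n : ℝ) * (r : ℝ) + (n : ℝ) + (r : ℝ) - 2)
        + (c - 1) / 4 * (2 * (r : ℝ) - 1
            - ((n : ℝ) - 2) * (η (X ⟨0, hn⟩ : E)) ^ 2
            + 3 * ‖C (X ⟨0, hn⟩)‖ ^ 2) =
      (∑ k, Rhat (U k) (U ⟨0, hr⟩) (U ⟨0, hr⟩) (U k))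
        + (∑ s, Rstar (X ⟨0, hn⟩) (X s) (X s) (X ⟨0, hn⟩))
        + (1 / 4) * ‖N‖ ^ 2
        + 3 * ∑ s ∈ Finset.univ.filter (fun s => s ≠ ⟨0, hn⟩),
            ‖A (X ⟨0, hn⟩) (X s)‖ ^ 2
        - δ + tV - aH) ↔
      (T (U ⟨0, hr⟩) (U ⟨0, hr⟩) =
          ∑ j ∈ Finset.univ.filter (fun j => j ≠ ⟨0, hr⟩), T (U j) (U j) ∧
        ∀ j : Fin r, j ≠ ⟨0, hr⟩ → T (U ⟨0, hr⟩) (U j) = 0)) := by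
  set k₀ : Fin r := ⟨0, hr⟩
  set s₀ : Fin n := ⟨0, hn⟩
  set ξH : ↥VSᗮ := ⟨ξ, hξH⟩
  have hηH : ∀ x : ↥VSᗮ, η x = ⟪x, ξH⟫ := fun x => hη x
  have hRhat' : Rhat = fiberCurvature c T := by
    funext x y z w; exact hRhat x y z w
  have hRstar' : Rstar = horizontalCurvature c ξH C A := by
    funext x y z w; rw [hRstar]; simp only [hηH]; rfl
  have hRc' : Rc = sasakianCurvature c ξ φ := by
    funext x y z w; rw [hRc]; simp only [hη]; rfl
  have hmix' : -δ + tV - aH = (c + 3) / 4 * (n * r) + (c - 1) / 4 * (2 * r) := by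
    rw [hmix, hRc', sum_sum_sasakianCurvature_mixed c U X hξH hξ hφskew
      (fun Y => hη Y ▸ hφ2 Y) hanti, Fintype.card_fin, Fintype.card_fin]
  have hAfilter : ∑ s ∈ univ.filter (fun s => s ≠ s₀), ‖A (X s₀) (X s)‖ ^ 2 =
      ∑ s, ‖A (X s₀) (X s)‖ ^ 2 := by
    rw [filter_ne', sum_erase (f := fun s => ‖A (X s₀) (X s)‖ ^ 2) univ
      (by simp [apply_self_eq_zero_of_skew (A := fun x y => A x y) hA])]
  have hCskew := inner_orthogonalProjectionOnto_comp_skew hφskew hC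
  rw [hRhat', hRstar', sum_fiberCurvature_eq c hT U k₀, ← hN,
    sum_horizontalCurvature_eq (ξ := ξH) c hξ hCskew hA X (X.orthonormal.1 s₀), hAfilter, hηH, Fintype.card_fin, Fintype.card_fin, filter_ne']
  have hdefect := norm_half_sum_sub_sq_add_sum_eq_zero_iff (fun j => T (U j) (U j))
    (fun j => T (U k₀) (U j)) k₀
  rw [← hN] at hdefect
  have hdefect_nonneg : 0 ≤ ‖(1 / 2 : ℝ) • N - T (U k₀) (U k₀)‖ ^ 2
      + ∑ k ∈ univ.erase k₀, ‖T (U k₀) (U k)‖ ^ 2 := by positivity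
  refine ⟨by linarith, ?_⟩
  rw [← hdefect]
  constructor <;> intro h <;> linarith
end
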